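/- arXiv:2412.20771 — 7 statements merged into one kernel-verified Lean document; each statement's English description precedes it below -/
import Mathlib

section
/- Let C be the [n,k]_q Reed–Solomon code with evaluation vector α = (α_1, …, α_n) of distinct elements of F_q. Suppose that for every two strictly increasing vectors I, J ∈ [n]^{2k−1} that agree on at most k − 1 coordinates, the (2k−1)×(2k−1) matrix V_{I,J}(α), whose row m is (1, α_{I_m}, …, α_{I_m}^{k−1}, α_{J_m}, …, α_{J_m}^{k−1}), has nonzero determinant. Then any two distinct codewords of C have a longest common subsequence of length at most 2k − 2; equivalently, the minimal fixed-length Levenshtein distance of C equals n − 2k + 2, i.e., C achieves the half-Singleton bound. -/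
/-!
A common subsequence of length `2k - 1` of the codewords of `f` and `g` yields strictly
increasing `I, J` with `f(α_{I_m}) = g(α_{J_m})` for all `m`. If `I` and `J` agree in at least
`k` places, `f - g` has `k` roots, so `f = g`. Otherwise the coefficient vector
`(f₀ - g₀, f₁, …, f_{k-1}, -g₁, …, -g_{k-1})` lies in the kernel of the nonsingular matrix
`V_{I,J}(α)`, because row `m` pairs with it to `f(α_{I_m}) - g(α_{J_m}) = 0`; so `f` and `g`
are the same constant.
-/

open Polynomial Matrix

theorem List.Sublist.exists_strictMono_ofFn {α : Type*} {n : ℕ} {u : Fin n → α} {z : List α}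
    (h : z.Sublist (List.ofFn u)) :
    ∃ I : Fin z.length → Fin n, StrictMono I ∧ ∀ m, u (I m) = z.get m := by
  obtain ⟨e, he⟩ := List.sublist_iff_exists_fin_orderEmbedding_get_eq.mp h
  exact ⟨Fin.cast List.length_ofFn ∘ e, fun _ _ hab => e.strictMono hab,
    fun m => by rw [he m, List.get_ofFn]; rfl⟩

namespace Polynomial

theorem natDegree_lt_of_degree_lt {R : Type*} [Semiring R] {p : R[X]} {k : ℕ} (hk : 0 < k)
    (h : p.degree < k) : p.natDegree < k := by
  rcases eq_or_ne p 0 with rfl | hp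
  · simpa using hk
  · exact (natDegree_lt_iff_degree_lt hp).mpr h

variable {R ι : Type*} [CommRing R]

def pairedMonomial (k : ℕ) (a b : R) (c : ℕ) : R :=
  if c = 0 then 1 else if c ≤ k - 1 then a ^ c else b ^ (c - (k - 1))

def pairedVandermonde (k : ℕ) (x y : ι → R) : Matrix ι (Fin (2 * k - 1)) R :=
  Matrix.of fun m c => pairedMonomial k (x m) (y m) c

def pairedCoeffs (k : ℕ) (f g : R[X]) (c : ℕ) : R :=
  if c = 0 then f.coeff 0 - g.coeff 0 else if c ≤ k - 1 then f.coeff c else -g.coeff (c - (k - 1))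

theorem sum_pairedMonomial_mul_pairedCoeffs {k : ℕ} (hk : 1 ≤ k) {f g : R[X]}
    (hf : f.natDegree < k) (hg : g.natDegree < k) (a b : R) :
    ∑ c ∈ Finset.range (2 * k - 1), pairedMonomial k a b c * pairedCoeffs k f g c =
      f.eval a - g.eval b := by
  obtain ⟨K, rfl⟩ := Nat.exists_eq_add_of_le' hk
  rw [show 2 * (K + 1) - 1 = (K + 1) + K by omega, Finset.sum_range_add, Finset.sum_range_succ',
    eval_eq_sum_range' hf, eval_eq_sum_range' hg, Finset.sum_range_succ' _ K,
    Finset.sum_range_succ' (fun c => g.coeff c * b ^ c) K]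
  have hlow : ∀ c ∈ Finset.range K, c < K := fun c => Finset.mem_range.mp
  have hhigh (c : ℕ) : ¬ K + 1 + c ≤ K := by omega
  have hshift (c : ℕ) : K + 1 + c - K = c + 1 := by omega
  simp +contextual [pairedMonomial, pairedCoeffs, hlow, hhigh, hshift, mul_comm]
  ring

theorem pairedVandermonde_mulVec_pairedCoeffs {k : ℕ} (hk : 1 ≤ k) {f g : R[X]}
    (hf : f.natDegree < k) (hg : g.natDegree < k) (x y : ι → R) :
    pairedVandermonde k x y *ᵥ (fun c => pairedCoeffs k f g c) =
      fun m => f.eval (x m) - g.eval (y m) := by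
  ext m
  rw [← sum_pairedMonomial_mul_pairedCoeffs hk hf hg, ← Fin.sum_univ_eq_sum_range]
  rfl

theorem eq_of_pairedCoeffs_eq_zero {k : ℕ} {f g : R[X]} (hf : f.natDegree < k)
    (hg : g.natDegree < k) (h : ∀ c < 2 * k - 1, pairedCoeffs k f g c = 0) : f = g := by
  ext c
  rcases Nat.eq_zero_or_pos c with rfl | hc
  · simpa [pairedCoeffs, sub_eq_zero] using h 0 (by omega)
  rcases lt_or_ge c k with hck | hck
  · have hfc := h c (by omega)
    have hgc := h (c + (k - 1)) (by omega)
    rw [pairedCoeffs, if_neg (by omega), if_pos (by omega)] at hfc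
    rw [pairedCoeffs, if_neg (by omega), if_neg (by omega), Nat.add_sub_cancel,
      neg_eq_zero] at hgc
    rw [hfc, hgc]
  · rw [coeff_eq_zero_of_natDegree_lt (by omega), coeff_eq_zero_of_natDegree_lt (by omega)]

theorem eq_of_eval_eq_of_det_pairedVandermonde_ne_zero [NoZeroDivisors R] {k : ℕ} (hk : 1 ≤ k)
    {f g : R[X]} (hf : f.degree < k) (hg : g.degree < k) {x y : Fin (2 * k - 1) → R}
    (hdet : (pairedVandermonde k x y).det ≠ 0) (h : ∀ m, f.eval (x m) = g.eval (y m)) :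
    f = g := by
  have hf' := natDegree_lt_of_degree_lt hk hf
  have hg' := natDegree_lt_of_degree_lt hk hg
  have hker := eq_zero_of_mulVec_eq_zero hdet <| by
    rw [pairedVandermonde_mulVec_pairedCoeffs hk hf' hg']
    ext m
    rw [h m, sub_self, Pi.zero_apply]
  exact eq_of_pairedCoeffs_eq_zero hf' hg' fun c hc => congrFun hker ⟨c, hc⟩

theorem eq_of_eval_eq_of_le_card [IsDomain R] {κ : Type*} [Fintype ι] [DecidableEq κ]
    {α : κ → R} (hα : Function.Injective α) {I J : ι → κ} (hI : Function.Injective I)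
    {f g : R[X]} {k : ℕ} (hf : f.degree < k) (hg : g.degree < k)
    (h : ∀ m, f.eval (α (I m)) = g.eval (α (J m)))
    (hagree : k ≤ (Finset.univ.filter fun m => I m = J m).card) : f = g := by
  classical
  have hcard :
      (k : WithBot ℕ) ≤ ((Finset.univ.filter fun m => I m = J m).image (α ∘ I)).card := by
    rwa [Finset.card_image_of_injective _ (hα.comp hI), Nat.cast_le]
  refine eq_of_degrees_lt_of_eval_finset_eq _ (hf.trans_le hcard) (hg.trans_le hcard) ?_
  simp only [Finset.mem_image, Finset.mem_filter, forall_exists_index, and_imp]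
  rintro _ m - hm rfl
  rw [Function.comp_apply, h m, hm]

end Polynomial

theorem rs_algebraic_condition_achieves_half_singleton_general
    {F : Type*} [Field F] {n k : ℕ} (hk : 1 ≤ k)
    (α : Fin n → F) (hα : Function.Injective α)
    (hcond : ∀ I J : Fin (2 * k - 1) → Fin n, StrictMono I → StrictMono J →
      (Finset.univ.filter fun m => I m = J m).card ≤ k - 1 →
      (Matrix.of fun m c : Fin (2 * k - 1) =>
        if (c : ℕ) = 0 then (1 : F)
        else if (c : ℕ) ≤ k - 1 then α (I m) ^ (c : ℕ)
        else α (J m) ^ ((c : ℕ) - (k - 1))).det ≠ 0) :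
    ∀ f g : Polynomial F, f.degree < (k : ℕ) → g.degree < (k : ℕ) →
      (fun i : Fin n => Polynomial.eval (α i) f) ≠
        (fun i : Fin n => Polynomial.eval (α i) g) →
      ∀ z : List F, z.Sublist (List.ofFn fun i : Fin n => Polynomial.eval (α i) f) →
        z.Sublist (List.ofFn fun i : Fin n => Polynomial.eval (α i) g) →
        z.length ≤ 2 * k - 2 := by
  intro f g hf hg hne z hzf hzg
  by_contra! hlen
  obtain ⟨I, hI, hfI⟩ := hzf.exists_strictMono_ofFn
  obtain ⟨J, hJ, hgJ⟩ := hzg.exists_strictMono_ofFn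
  have hN : 2 * k - 1 ≤ z.length := by omega
  have hIN : StrictMono fun m => I (Fin.castLE hN m) := hI.comp (Fin.strictMono_castLE hN)
  have hJN : StrictMono fun m => J (Fin.castLE hN m) := hJ.comp (Fin.strictMono_castLE hN)
  have heval (m : Fin (2 * k - 1)) :
      f.eval (α (I (Fin.castLE hN m))) = g.eval (α (J (Fin.castLE hN m))) :=
    (hfI _).trans (hgJ _).symm
  refine hne (congrArg (fun p i => eval (α i) p) ?_)
  by_cases hagree :
      (Finset.univ.filter fun m => I (Fin.castLE hN m) = J (Fin.castLE hN m)).card ≤ k - 1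
  -- the matrix in `hcond` unfolds to `pairedVandermonde k (α ∘ I) (α ∘ J)`
  · exact eq_of_eval_eq_of_det_pairedVandermonde_ne_zero hk hf hg (hcond _ _ hIN hJN hagree) heval
  · exact eq_of_eval_eq_of_le_card hα hIN.injective hf hg heval (by omega)

/-- If the evaluation vector `α` of an `[n,k]_q` Reed–Solomon code satisfies the algebraic
condition (for all strictly increasing `I, J ∈ [n]^{2k-1}` agreeing on at most `k - 1`
coordinates, the `(2k-1) × (2k-1)` matrix with row `m` equal to
`(1, α_{I_m}, …, α_{I_m}^{k-1}, α_{J_m}, …, α_{J_m}^{k-1})` is nonsingular), then any two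
distinct codewords have a longest common subsequence of length at most `2k - 2`, i.e. the
code achieves the half-Singleton bound. -/
theorem rs_algebraic_condition_achieves_half_singleton
    {F : Type*} [Field F] [Fintype F] {n k : ℕ} (hk : 1 ≤ k) (hkn : k ≤ n)
    (α : Fin n → F) (hα : Function.Injective α)
    (hcond : ∀ I J : Fin (2 * k - 1) → Fin n, StrictMono I → StrictMono J →
      (Finset.univ.filter fun m => I m = J m).card ≤ k - 1 →
      (Matrix.of fun m c : Fin (2 * k - 1) =>
        if (c : ℕ) = 0 then (1 : F)
        else if (c : ℕ) ≤ k - 1 then α (I m) ^ (c : ℕ)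
        else α (J m) ^ ((c : ℕ) - (k - 1))).det ≠ 0) :
    ∀ f g : Polynomial F, f.degree < (k : ℕ) → g.degree < (k : ℕ) →
      (fun i : Fin n => Polynomial.eval (α i) f) ≠
        (fun i : Fin n => Polynomial.eval (α i) g) →
      ∀ z : List F, z.Sublist (List.ofFn fun i : Fin n => Polynomial.eval (α i) f) →
        z.Sublist (List.ofFn fun i : Fin n => Polynomial.eval (α i) g) →
        z.length ≤ 2 * k - 2 :=
  rs_algebraic_condition_achieves_half_singleton_general hk α hα hcond
end

section
/- Let α = (α_1, …, α_n) be a vector of distinct elements of F_q satisfying the algebraic condition for k = 2: for every two strictly increasing triples I, J ∈ [n]^3 that agree on at most one coordinate, det [[1, α_{I_1}, α_{J_1}], [1, α_{I_2}, α_{J_2}], [1, α_{I_3}, α_{J_3}]] ≠ 0. Then the map Γ sending each index triple 1 ≤ i < j < k ≤ n to Γ(α_i, α_j, α_k) = (α_i − α_j)/(α_j − α_k) ∈ F_q is injective: distinct increasing triples of indices yield distinct values of Γ. -/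
/-- If the evaluation vector `α = (α_1, …, α_n)` of distinct elements of `F_q` satisfies
the algebraic condition for `k = 2` (for every two strictly increasing triples `I, J`
agreeing on at most one coordinate, the corresponding `3 × 3` determinant is nonzero),
then the map `Γ` sending each strictly increasing index triple `(i, j, k)` to
`(α_i - α_j)/(α_j - α_k)` is injective. -/
theorem gamma_injective {F : Type*} [Field F] [Fintype F] {n : ℕ}
    (α : Fin n → F) (hα : Function.Injective α)
    (hcond : ∀ I J : Fin 3 → Fin n, StrictMono I → StrictMono J →
      (Finset.univ.filter fun m => I m = J m).card ≤ 1 →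
      Matrix.det !![1, α (I 0), α (J 0); 1, α (I 1), α (J 1); 1, α (I 2), α (J 2)] ≠ 0) :
    ∀ I J : Fin 3 → Fin n, StrictMono I → StrictMono J →
      (α (I 0) - α (I 1)) / (α (I 1) - α (I 2)) =
        (α (J 0) - α (J 1)) / (α (J 1) - α (J 2)) → I = J := by
  intro I J hI hJ heq
  have hd1 : α (I 1) - α (I 2) ≠ 0 :=
    sub_ne_zero.mpr fun h => (hI (show (1:Fin 3) < 2 by decide)).ne (hα h)
  have hd2 : α (J 1) - α (J 2) ≠ 0 :=
    sub_ne_zero.mpr fun h => (hJ (show (1:Fin 3) < 2 by decide)).ne (hα h)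
  have key : (α (I 0) - α (I 1)) * (α (J 1) - α (J 2)) =
      (α (J 0) - α (J 1)) * (α (I 1) - α (I 2)) := (div_eq_div_iff hd1 hd2).mp heq
  have hdet : Matrix.det !![1, α (I 0), α (J 0); 1, α (I 1), α (J 1);
      1, α (I 2), α (J 2)] = 0 := by
    simp [Matrix.det_fin_three, Matrix.vecHead, Matrix.vecTail]
    linear_combination key
  by_cases h0 : I 0 = J 0 <;> by_cases h1 : I 1 = J 1 <;> by_cases h2 : I 2 = J 2
  · funext m; fin_cases m <;> assumption
  · -- only coord 2 differs
    rw [h0, h1] at key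
    have hb01 : α (J 0) - α (J 1) ≠ 0 :=
      sub_ne_zero.mpr fun h => (hJ (show (0:Fin 3) < 1 by decide)).ne (hα h)
    have e : α (J 1) - α (J 2) = α (J 1) - α (I 2) := mul_left_cancel₀ hb01 key
    exact absurd (hα (show α (I 2) = α (J 2) by linear_combination e)) h2
  · -- only coord 1 differs
    rw [h0, h2] at key
    have hz : (α (J 0) - α (J 2)) * (α (J 1) - α (I 1)) = 0 := by linear_combination key
    rcases mul_eq_zero.mp hz with h | h
    · exact absurd (hα (sub_eq_zero.mp h)) (hJ (show (0:Fin 3) < 2 by decide)).ne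
    · exact absurd (hα (sub_eq_zero.mp h)).symm h1
  · -- coords 1,2 differ
    refine absurd hdet (hcond I J hI hJ ?_)
    rw [Finset.card_le_one_iff]
    intro a b ha hb
    simp only [Finset.mem_filter, Finset.mem_univ, true_and] at ha hb
    clear hcond hdet heq key hd1 hd2 hα hI hJ
    fin_cases a <;> fin_cases b <;> simp_all
  · -- only coord 0 differs
    rw [h1, h2] at key
    have e : α (I 0) - α (J 1) = α (J 0) - α (J 1) := mul_right_cancel₀ hd2 key
    exact absurd (hα (show α (I 0) = α (J 0) by linear_combination e)) h0
  · refine absurd hdet (hcond I J hI hJ ?_)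
    rw [Finset.card_le_one_iff]
    intro a b ha hb
    simp only [Finset.mem_filter, Finset.mem_univ, true_and] at ha hb
    clear hcond hdet heq key hd1 hd2 hα hI hJ
    fin_cases a <;> fin_cases b <;> simp_all
  · refine absurd hdet (hcond I J hI hJ ?_)
    rw [Finset.card_le_one_iff]
    intro a b ha hb
    simp only [Finset.mem_filter, Finset.mem_univ, true_and] at ha hb
    clear hcond hdet heq key hd1 hd2 hα hI hJ
    fin_cases a <;> fin_cases b <;> simp_all
  · refine absurd hdet (hcond I J hI hJ ?_)
    rw [Finset.card_le_one_iff]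
    intro a b ha hb
    simp only [Finset.mem_filter, Finset.mem_univ, true_and] at ha hb
    clear hcond hdet heq key hd1 hd2 hα hI hJ
    fin_cases a <;> fin_cases b <;> simp_all
end

section
/- Let F_q be a finite field of odd characteristic, let γ ∈ F_{q^3} be a root of a degree-3 irreducible polynomial over F_q, let δ_1, …, δ_n be distinct nonzero elements of F_q, and set α_i = δ_i + δ_i² γ for i ∈ [n]. Then the [n,2] Reed–Solomon code over F_{q^3} with evaluation vector (α_1, …, α_n) can correct any n − 3 insertion–deletion errors; equivalently, any two distinct codewords have a longest common subsequence of length at most 2. -/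
/-!
A common subsequence of length `3` gives distinct positions `i₀, i₁, i₂` and `j₀, j₁, j₂` with
`f (α iₖ) = g (α jₖ)`. For linear `f` and nonconstant `g`, comparing slopes yields
`(α j₁ - α j₀) (α i₂ - α i₀) = (α j₂ - α j₀) (α i₁ - α i₀)`. As `α i = δ i + δ i² γ` and
`1, γ, γ²` are linearly independent over `F`, this identity splits into three polynomial
equations over `F` in the `δ`'s, which in odd characteristic force `δ j₀ = δ i₀` and
`δ j₁ = δ i₁`. Hence `f` and `g` agree at two distinct points, so `f = g`.
-/

open Polynomial

theorem minpoly_degree_eq_of_irreducible {F E : Type*} [Field F] [Field E] [Algebra F E]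
    {γ : E} {φ : F[X]} (hφ : Irreducible φ) (hroot : aeval γ φ = 0) :
    (minpoly F γ).degree = φ.degree := by
  rw [← minpoly.eq_of_irreducible hφ hroot, degree_mul,
    degree_C (inv_ne_zero (leadingCoeff_ne_zero.mpr hφ.ne_zero)), add_zero]

theorem Polynomial.eval_sub_eval_of_degree_lt_two {R : Type*} [CommRing R] {p : R[X]}
    (hp : p.degree < 2) (s t : R) : p.eval s - p.eval t = p.coeff 1 * (s - t) := by
  conv_lhs => rw [eq_X_add_C_of_degree_le_one (Order.le_of_lt_succ hp)]
  simp only [eval_add, eval_mul, eval_C, eval_X]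
  ring

/-- If `g` is constant, `f` and `g` agree at `p 0` and `p 1` directly; otherwise comparing the
slopes of `f` and `g` gives the hypothesis of `hrigid`. -/
theorem Polynomial.eq_of_eval_eq_eval_of_slope_rigid {K : Type*} [Field K] {f g : K[X]}
    (hf : f.degree < 2) (hg : g.degree < 2) {p q : Fin 3 → K}
    (hfg : ∀ k, f.eval (p k) = g.eval (q k)) (hp : p 0 ≠ p 1)
    (hrigid : (q 1 - q 0) * (p 2 - p 0) = (q 2 - q 0) * (p 1 - p 0) → p 0 = q 0 ∧ p 1 = q 1) :
    f = g := by
  classical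
  have hslope : ∀ k, g.coeff 1 * (q k - q 0) = f.coeff 1 * (p k - p 0) := fun k => by
    rw [← eval_sub_eval_of_degree_lt_two hf, ← eval_sub_eval_of_degree_lt_two hg, hfg, hfg]
  have hagree : f.eval (p 0) = g.eval (p 0) ∧ f.eval (p 1) = g.eval (p 1) := by
    by_cases hg1 : g.coeff 1 = 0
    · have hconst : ∀ k, g.eval (q k) = g.eval (p k) := fun k => by
        rw [← sub_eq_zero, eval_sub_eval_of_degree_lt_two hg, hg1, zero_mul]
      exact ⟨(hfg 0).trans (hconst 0), (hfg 1).trans (hconst 1)⟩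
    · obtain ⟨h0, h1⟩ := hrigid <| mul_left_cancel₀ hg1 <| by
        linear_combination (p 2 - p 0) * hslope 1 - (p 1 - p 0) * hslope 2
      exact ⟨by rw [hfg, h0], by rw [hfg, h1]⟩
  have hcard : (({p 0, p 1} : Finset K).card : WithBot ℕ) = 2 := by
    rw [Finset.card_pair hp]; rfl
  refine eq_of_degrees_lt_of_eval_finset_eq {p 0, p 1} (hcard ▸ hf) (hcard ▸ hg) ?_
  simpa using hagree

theorem List.exists_orderEmbedding_of_sublist_ofFn {α : Type*} {n : ℕ} {a : Fin n → α}
    {l : List α} (h : l.Sublist (List.ofFn a)) :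
    ∃ e : Fin l.length ↪o Fin n, ∀ k, l.get k = a (e k) := by
  obtain ⟨e, he⟩ := List.sublist_iff_exists_fin_orderEmbedding_get_eq.mp h
  refine ⟨e.trans (Fin.castOrderIso List.length_ofFn).toOrderEmbedding, fun k => ?_⟩
  rw [he, List.get_ofFn]
  rfl

/-- `e1`, `e2`, `e3` are the coordinates on `1, γ, γ²` of the slope relation in
`eq_and_eq_of_parabolaPoint_slope_eq`. -/
theorem eq_and_eq_of_parabolaPoint_slope_coeffs {F : Type*} [Field F] (h2 : (2 : F) ≠ 0)
    {a b c x y z : F} (hac : a ≠ c) (hbc : b ≠ c) (hxy : x ≠ y)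
    (e1 : (y - x) * (c - a) = (z - x) * (b - a))
    (e2 : (y - x) * (c ^ 2 - a ^ 2) + (y ^ 2 - x ^ 2) * (c - a)
      = (z - x) * (b ^ 2 - a ^ 2) + (z ^ 2 - x ^ 2) * (b - a))
    (e3 : (y ^ 2 - x ^ 2) * (c ^ 2 - a ^ 2) = (z ^ 2 - x ^ 2) * (b ^ 2 - a ^ 2)) :
    x = a ∧ y = b := by
  have hK : (y - x) * (c - a) ≠ 0 :=
    mul_ne_zero (sub_ne_zero.mpr hxy.symm) (sub_ne_zero.mpr hac.symm)
  have hsum : c + y = b + z := by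
    refine sub_eq_zero.mp ((mul_eq_zero.mp ?_).resolve_left hK)
    linear_combination e2 - (a + b + x + z) * e1
  have hprod : (y + x) * (c + a) = (z + x) * (b + a) := by
    refine sub_eq_zero.mp ((mul_eq_zero.mp ?_).resolve_left hK)
    linear_combination e3 - (z + x) * (b + a) * e1
  have hy : y = x + (b - a) := by
    have : (c - b) * ((y - x) - (b - a)) = 0 := by linear_combination e1 - (b - a) * hsum
    linear_combination (mul_eq_zero.mp this).resolve_left (sub_ne_zero.mpr hbc.symm)
  have hz : z = x + (c - a) := by linear_combination hy - hsum
  subst hy hz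
  have hx : (c - b) * (x - a) = 0 := by
    refine (mul_eq_zero.mp ?_).resolve_left h2
    linear_combination hprod
  have hxa : x = a := sub_eq_zero.mp ((mul_eq_zero.mp hx).resolve_left (sub_ne_zero.mpr hbc.symm))
  exact ⟨hxa, by rw [hxa]; ring⟩

section Parabola

variable {F E : Type*} [Field F] [Field E] [Algebra F E]

/-- The point `(x, x²)` of the parabola, written in the coordinates `1, γ` of `E` over `F`. -/
def parabolaPoint (γ : E) (x : F) : E :=
  algebraMap F E x + algebraMap F E x ^ 2 * γ

theorem eq_zero_of_add_mul_add_mul_sq_eq_zero {γ : E} (hγ : 2 < (minpoly F γ).degree)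
    {x₀ x₁ x₂ : F}
    (h : algebraMap F E x₀ + algebraMap F E x₁ * γ + algebraMap F E x₂ * γ ^ 2 = 0) :
    x₀ = 0 ∧ x₁ = 0 ∧ x₂ = 0 := by
  set p : F[X] := C x₂ * X ^ 2 + C x₁ * X + C x₀
  have hp : p = 0 := by
    by_contra hp
    have hdeg := (minpoly.degree_le_of_ne_zero F γ hp (by simp [p, ← h]; ring)).trans
      degree_quadratic_le
    exact absurd (hγ.trans_le hdeg) (lt_irrefl _)
  refine ⟨?_, ?_, ?_⟩
  · simpa [p] using congrArg (coeff · 0) hp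
  · simpa [p] using congrArg (coeff · 1) hp
  · simpa [p, coeff_X_pow] using congrArg (coeff · 2) hp

theorem parabolaPoint_sub_parabolaPoint (γ : E) (x y : F) :
    parabolaPoint γ y - parabolaPoint γ x
      = algebraMap F E (y - x) + algebraMap F E (y ^ 2 - x ^ 2) * γ := by
  simp only [parabolaPoint, map_sub, map_pow]
  ring

theorem parabolaPoint_injective {γ : E} (hγ : 2 < (minpoly F γ).degree) :
    Function.Injective (parabolaPoint (F := F) γ) := by
  intro x y hxy
  have h : algebraMap F E (y - x) + algebraMap F E (y ^ 2 - x ^ 2) * γ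
      + algebraMap F E 0 * γ ^ 2 = 0 := by
    rw [← parabolaPoint_sub_parabolaPoint, hxy, sub_self, map_zero, zero_mul, add_zero]
  exact (sub_eq_zero.mp (eq_zero_of_add_mul_add_mul_sq_eq_zero hγ h).1).symm

theorem eq_and_eq_of_parabolaPoint_slope_eq {γ : E} (hγ : 2 < (minpoly F γ).degree)
    (h2 : (2 : F) ≠ 0) {a b c x y z : F} (hac : a ≠ c) (hbc : b ≠ c) (hxy : x ≠ y)
    (h : (parabolaPoint γ y - parabolaPoint γ x) * (parabolaPoint γ c - parabolaPoint γ a)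
      = (parabolaPoint γ z - parabolaPoint γ x) * (parabolaPoint γ b - parabolaPoint γ a)) :
    x = a ∧ y = b := by
  simp only [parabolaPoint_sub_parabolaPoint] at h
  obtain ⟨e1, e2, e3⟩ := eq_zero_of_add_mul_add_mul_sq_eq_zero hγ (x₀ :=
    (y - x) * (c - a) - (z - x) * (b - a))
    (x₁ := (y - x) * (c ^ 2 - a ^ 2) + (y ^ 2 - x ^ 2) * (c - a)
      - ((z - x) * (b ^ 2 - a ^ 2) + (z ^ 2 - x ^ 2) * (b - a)))
    (x₂ := (y ^ 2 - x ^ 2) * (c ^ 2 - a ^ 2) - (z ^ 2 - x ^ 2) * (b ^ 2 - a ^ 2))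
    (by simp only [map_sub, map_add, map_mul] at h ⊢; linear_combination h)
  exact eq_and_eq_of_parabolaPoint_slope_coeffs h2 hac hbc hxy (sub_eq_zero.mp e1)
    (sub_eq_zero.mp e2) (sub_eq_zero.mp e3)

end Parabola

theorem rs2_construction_corrects_insdel_general
    {F E : Type*} [Field F] [Field E] [Algebra F E]
    (hchar : ringChar F ≠ 2)
    (γ : E) (φ : Polynomial F) (hφ : Irreducible φ) (hdeg : φ.degree = 3)
    (hroot : Polynomial.aeval γ φ = 0)
    {n : ℕ} (δ : Fin n → F) (hδinj : Function.Injective δ)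
    (α : Fin n → E)
    (hα : ∀ i, α i = algebraMap F E (δ i) + algebraMap F E (δ i) ^ 2 * γ) :
    ∀ f g : Polynomial E, f.degree < 2 → g.degree < 2 →
      (fun i : Fin n => Polynomial.eval (α i) f) ≠
        (fun i : Fin n => Polynomial.eval (α i) g) →
      ∀ z : List E, z.Sublist (List.ofFn fun i : Fin n => Polynomial.eval (α i) f) →
        z.Sublist (List.ofFn fun i : Fin n => Polynomial.eval (α i) g) →
        z.length ≤ 2 := by
  have hγ : 2 < (minpoly F γ).degree := by
    rw [minpoly_degree_eq_of_irreducible hφ hroot, hdeg]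
    exact_mod_cast Nat.lt_succ_self 2
  obtain rfl : α = parabolaPoint γ ∘ δ := funext hα
  intro f g hf hg hne z hzf hzg
  by_contra! hlen
  obtain ⟨u, hu⟩ := List.exists_orderEmbedding_of_sublist_ofFn hzf
  obtain ⟨v, hv⟩ := List.exists_orderEmbedding_of_sublist_ofFn hzg
  set w := Fin.castLEOrderEmb hlen
  have hu_inj : Function.Injective (δ ∘ u ∘ w) := hδinj.comp (u.injective.comp w.injective)
  have hv_inj : Function.Injective (δ ∘ v ∘ w) := hδinj.comp (v.injective.comp w.injective)
  refine hne (congrArg (fun (p : Polynomial E) i => p.eval ((parabolaPoint γ ∘ δ) i)) ?_)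
  refine eq_of_eval_eq_eval_of_slope_rigid hf hg (p := parabolaPoint γ ∘ δ ∘ u ∘ w)
    (q := parabolaPoint γ ∘ δ ∘ v ∘ w) (fun k => (hu (w k)).symm.trans (hv (w k)))
    ((parabolaPoint_injective hγ).ne (hu_inj.ne (by decide))) fun h => ?_
  obtain ⟨h0, h1⟩ := eq_and_eq_of_parabolaPoint_slope_eq hγ (Ring.two_ne_zero hchar)
    (hu_inj.ne (by decide)) (hu_inj.ne (by decide)) (hv_inj.ne (by decide)) h
  exact ⟨congrArg (parabolaPoint γ) h0.symm, congrArg (parabolaPoint γ) h1.symm⟩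

/-- **Construction (Con et al.).** Let `F = F_q` have odd characteristic, let `γ` be a
root (in the cubic extension `E = F_{q^3}`) of a degree-3 irreducible polynomial over
`F`, let `δ_1, …, δ_n` be distinct nonzero elements of `F`, and set
`α_i = δ_i + δ_i² γ`. Then the `[n,2]` Reed–Solomon code over `E` with evaluation vector
`(α_1, …, α_n)` corrects any `n - 3` insertion–deletion errors; equivalently, any two
distinct codewords have a longest common subsequence of length at most `2`. -/
theorem rs2_construction_corrects_insdel
    {F E : Type*} [Field F] [Fintype F] [Field E] [Algebra F E]
    (hchar : ringChar F ≠ 2) (hrank : Module.finrank F E = 3)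
    (γ : E) (φ : Polynomial F) (hφ : Irreducible φ) (hdeg : φ.degree = 3)
    (hroot : Polynomial.aeval γ φ = 0)
    {n : ℕ} (δ : Fin n → F) (hδinj : Function.Injective δ) (hδ0 : ∀ i, δ i ≠ 0)
    (α : Fin n → E)
    (hα : ∀ i, α i = algebraMap F E (δ i) + algebraMap F E (δ i) ^ 2 * γ) :
    ∀ f g : Polynomial E, f.degree < 2 → g.degree < 2 →
      (fun i : Fin n => Polynomial.eval (α i) f) ≠
        (fun i : Fin n => Polynomial.eval (α i) g) →
      ∀ z : List E, z.Sublist (List.ofFn fun i : Fin n => Polynomial.eval (α i) f) →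
        z.Sublist (List.ofFn fun i : Fin n => Polynomial.eval (α i) g) →
        z.length ≤ 2 :=
  rs2_construction_corrects_insdel_general hchar γ φ hφ hdeg hroot δ hδinj α hα
end

section
/- Let F_q be a finite field of odd characteristic, let γ ∈ F_{q^3} be a root of a degree-3 irreducible polynomial over F_q, let δ_1, …, δ_n be distinct nonzero elements of F_q, and set α_i = δ_i + δ_i² γ. Then the evaluation vector (α_1, …, α_n) satisfies the algebraic condition for k = 2: for every two strictly increasing triples I, J ∈ [n]^3 that agree on at most one coordinate, det [[1, α_{I_1}, α_{J_1}], [1, α_{I_2}, α_{J_2}], [1, α_{I_3}, α_{J_3}]] ≠ 0 (determinant computed in F_{q^3}). -/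
/-- Let `F = F_q` have odd characteristic, let `γ` be a root (in the cubic extension
`E = F_{q^3}`) of a degree-3 irreducible polynomial over `F`, let `δ_1, …, δ_n` be
distinct nonzero elements of `F`, and set `α_i = δ_i + δ_i² γ`. Then the evaluation
vector `(α_1, …, α_n)` satisfies the algebraic condition for `k = 2`: for every two
strictly increasing triples `I, J ∈ [n]^3` agreeing on at most one coordinate,
`det [[1, α_{I_1}, α_{J_1}], [1, α_{I_2}, α_{J_2}], [1, α_{I_3}, α_{J_3}]] ≠ 0`. -/
theorem rs2_construction_satisfies_algebraic_condition
    {F E : Type*} [Field F] [Fintype F] [Field E] [Algebra F E]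
    (hchar : ringChar F ≠ 2) (hrank : Module.finrank F E = 3)
    (γ : E) (φ : Polynomial F) (hφ : Irreducible φ) (hdeg : φ.degree = 3)
    (hroot : Polynomial.aeval γ φ = 0)
    {n : ℕ} (δ : Fin n → F) (hδinj : Function.Injective δ) (hδ0 : ∀ i, δ i ≠ 0)
    (α : Fin n → E)
    (hα : ∀ i, α i = algebraMap F E (δ i) + algebraMap F E (δ i) ^ 2 * γ) :
    ∀ I J : Fin 3 → Fin n, StrictMono I → StrictMono J →
      (Finset.univ.filter fun m => I m = J m).card ≤ 1 →
      Matrix.det !![1, α (I 0), α (J 0); 1, α (I 1), α (J 1); 1, α (I 2), α (J 2)] ≠ 0 := by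
  intro I J hI hJ hcard hdet
  -- finite dimensionality and the minimal polynomial of γ
  have hfd : FiniteDimensional F E := FiniteDimensional.of_finrank_pos (by rw [hrank]; norm_num)
  have hint : IsIntegral F γ := IsIntegral.of_finite F γ
  have hdvd : minpoly F γ ∣ φ := minpoly.dvd F γ hroot
  have hmindeg : (minpoly F γ).degree = 3 := by
    obtain ⟨c, hc⟩ := hdvd
    rcases hφ.isUnit_or_isUnit hc with h | h
    · exact absurd h (minpoly.not_isUnit F γ)
    · have hc0 : (Polynomial.degree c) = 0 := Polynomial.degree_eq_zero_of_isUnit h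
      have := hdeg
      rw [hc, Polynomial.degree_mul, hc0, add_zero] at this
      exact this
  -- abbreviations
  have e00 := hα (I 0); have e01 := hα (I 1); have e02 := hα (I 2)
  have e10 := hα (J 0); have e11 := hα (J 1); have e12 := hα (J 2)
  set x0 := δ (I 0) with hx0d
  set x1 := δ (I 1) with hx1d
  set x2 := δ (I 2) with hx2d
  set y0 := δ (J 0) with hy0d
  set y1 := δ (J 1) with hy1d
  set y2 := δ (J 2) with hy2d
  set D0 : F := (x1-x0)*(y2-y0)-(x2-x0)*(y1-y0) with hD0
  set D1 : F := (x1^2-x0^2)*(y2-y0)-(x2^2-x0^2)*(y1-y0)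
      + ((x1-x0)*(y2^2-y0^2)-(x2-x0)*(y1^2-y0^2)) with hD1
  set D2 : F := (x1^2-x0^2)*(y2^2-y0^2)-(x2^2-x0^2)*(y1^2-y0^2) with hD2
  -- the determinant decomposes along powers of γ
  have key : algebraMap F E D0 + algebraMap F E D1 * γ + algebraMap F E D2 * γ ^ 2 = 0 := by
    rw [Matrix.det_fin_three] at hdet
    simp only [Matrix.of_apply, Matrix.cons_val', Matrix.cons_val_zero, Matrix.empty_val',
      Matrix.cons_val_fin_one, Matrix.cons_val_one, Matrix.head_cons, Matrix.head_fin_const,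
      Matrix.cons_val_two, Matrix.tail_cons, e00, e01, e02, e10, e11, e12] at hdet
    rw [hD0, hD1, hD2]
    simp only [map_sub, map_add, map_mul, map_pow, map_one]
    linear_combination hdet
  -- hence all three F-coefficients vanish
  set ψ : Polynomial F := Polynomial.C D0 + Polynomial.C D1 * Polynomial.X
      + Polynomial.C D2 * Polynomial.X ^ 2 with hψ
  have hψ0 : Polynomial.aeval γ ψ = 0 := by
    rw [hψ]
    simp only [map_add, map_mul, map_pow, Polynomial.aeval_C, Polynomial.aeval_X]
    exact key
  have hψz : ψ = 0 := by
    by_contra hne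
    have hle := minpoly.degree_le_of_ne_zero F γ hne hψ0
    have hdψ : ψ.degree ≤ 2 := by rw [hψ]; compute_degree
    rw [hmindeg] at hle
    exact absurd (hle.trans hdψ) (by norm_num)
  have h0 : D0 = 0 := by
    have := congrArg (fun p => Polynomial.coeff p 0) hψz
    simpa [hψ, Polynomial.coeff_add, Polynomial.coeff_C, Polynomial.coeff_C_mul,
      Polynomial.coeff_X, Polynomial.coeff_X_pow] using this
  have h1 : D1 = 0 := by
    have := congrArg (fun p => Polynomial.coeff p 1) hψz
    simpa [hψ, Polynomial.coeff_add, Polynomial.coeff_C, Polynomial.coeff_C_mul,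
      Polynomial.coeff_X, Polynomial.coeff_X_pow] using this
  have h2 : D2 = 0 := by
    have := congrArg (fun p => Polynomial.coeff p 2) hψz
    simpa [hψ, Polynomial.coeff_add, Polynomial.coeff_C, Polynomial.coeff_C_mul,
      Polynomial.coeff_X, Polynomial.coeff_X_pow] using this
  rw [hD0] at h0; rw [hD1] at h1; rw [hD2] at h2
  -- distinctness
  have hx01 : x1 - x0 ≠ 0 := sub_ne_zero.mpr fun h =>
    (hI (show (0:Fin 3) < 1 by decide)).ne' (hδinj h)
  have hx02 : x2 - x0 ≠ 0 := sub_ne_zero.mpr fun h =>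
    (hI (show (0:Fin 3) < 2 by decide)).ne' (hδinj h)
  have hx12 : x2 - x1 ≠ 0 := sub_ne_zero.mpr fun h =>
    (hI (show (1:Fin 3) < 2 by decide)).ne' (hδinj h)
  have hy01 : y1 ≠ y0 := fun h => (hJ (show (0:Fin 3) < 1 by decide)).ne' (hδinj h)
  -- the affine parametrization from D0 = 0
  set B : F := (y1 - y0) / (x1 - x0) with hB
  set A : F := y0 - B * x0 with hA
  have hBmul : B * (x1 - x0) = y1 - y0 := div_mul_cancel₀ _ hx01
  have hy0e : y0 = A + B * x0 := by rw [hA]; ring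
  have hy1e : y1 = A + B * x1 := by rw [hA]; linear_combination -hBmul
  have hy2e : y2 = A + B * x2 := by
    have hfac : (x1 - x0) * (y2 - (A + B * x2)) = 0 := by
      rw [hA]; linear_combination h0 - (x2 - x0) * hBmul
    rcases mul_eq_zero.mp hfac with h | h
    · exact absurd h hx01
    · linear_combination sub_eq_zero.mp h
  have hV : (x1 - x0) * ((x2 - x0) * (x2 - x1)) ≠ 0 :=
    mul_ne_zero hx01 (mul_ne_zero hx02 hx12)
  -- D1 = 0 forces B = 0 or B = 1
  rw [hy0e, hy1e, hy2e] at h1 h2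
  have hBB : (B ^ 2 - B) * ((x1 - x0) * ((x2 - x0) * (x2 - x1))) = 0 := by
    linear_combination h1
  have hB01 : B = 0 ∨ B = 1 := by
    rcases mul_eq_zero.mp hBB with h | h
    · have : B * (B - 1) = 0 := by linear_combination h
      rcases mul_eq_zero.mp this with h' | h'
      · exact Or.inl h'
      · exact Or.inr (by linear_combination sub_eq_zero.mp h')
    · exact absurd h hV
  rcases hB01 with hB0 | hB1
  · -- B = 0 contradicts y0 ≠ y1
    apply hy01
    rw [hy0e, hy1e, hB0]; ring
  · -- B = 1 : D2 = 0 forces A = 0 and hence y = x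
    rw [hB1] at hy0e hy1e hy2e h2
    have h2ne : (2 : F) ≠ 0 := Ring.two_ne_zero hchar
    have hAA : A * ((2 : F) * ((x1 - x0) * ((x2 - x0) * (x2 - x1)))) = 0 := by
      linear_combination -h2
    have hA0 : A = 0 := by
      rcases mul_eq_zero.mp hAA with h | h
      · exact h
      · exact absurd h (mul_ne_zero h2ne hV)
    rw [hA0] at hy0e hy1e hy2e
    have hJI0 : I 0 = J 0 := hδinj (show x0 = y0 by linear_combination -hy0e)
    have hJI1 : I 1 = J 1 := hδinj (show x1 = y1 by linear_combination -hy1e)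
    have hJI2 : I 2 = J 2 := hδinj (show x2 = y2 by linear_combination -hy2e)
    have hall : (Finset.univ.filter fun m => I m = J m) = Finset.univ := by
      ext m
      simp only [Finset.mem_filter, Finset.mem_univ, true_and, iff_true]
      fin_cases m
      · exact hJI0
      · exact hJI1
      · exact hJI2
    rw [hall] at hcard
    simp [Finset.card_univ] at hcard
end

section
/- Let α = (α_1, …, α_n) be distinct elements of F_q satisfying the algebraic condition for k = 2 (for every two strictly increasing triples I, J ∈ [n]^3 agreeing on at most one coordinate, det [[1, α_{I_1}, α_{J_1}], [1, α_{I_2}, α_{J_2}], [1, α_{I_3}, α_{J_3}]] ≠ 0). Let m_1, m_2 ∈ F_q with m_2 ≠ 0, let c_i = m_1 + m_2·α_i for i ∈ [n], let 1 ≤ κ_1 < κ_2 < κ_3 ≤ n, and set β = (c_{κ_1} − c_{κ_2})/(c_{κ_2} − c_{κ_3}). Then (κ_1, κ_2, κ_3) is the unique strictly increasing triple (J_1, J_2, J_3) ∈ [n]^3 satisfying (α_{J_1} − α_{J_2})/(α_{J_2} − α_{J_3}) = β. Consequently, the entire codeword (c_1, …, c_n) and the message (m_1, m_2) are uniquely determined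 by the received triple (c_{κ_1}, c_{κ_2}, c_{κ_3}). -/
private lemma rs2_aux_det3 {F : Type*} [Field F] (x0 x1 x2 y0 y1 y2 : F) :
    Matrix.det !![1, x0, y0; 1, x1, y1; 1, x2, y2]
      = (x0 - x1) * (y1 - y2) - (y0 - y1) * (x1 - x2) := by
  simp [Matrix.det_fin_three, Matrix.vecHead, Matrix.vecTail]
  ring

private lemma rs2_aux_card {n : ℕ} (κ J : Fin 3 → Fin n)
    (h01 : ¬(κ 0 = J 0 ∧ κ 1 = J 1)) (h02 : ¬(κ 0 = J 0 ∧ κ 2 = J 2))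
    (h12 : ¬(κ 1 = J 1 ∧ κ 2 = J 2)) :
    (Finset.univ.filter fun m => κ m = J m).card ≤ 1 := by
  rw [Finset.card_le_one]
  intro a ha b hb
  simp only [Finset.mem_filter, Finset.mem_univ, true_and] at ha hb
  fin_cases a <;> fin_cases b <;> simp_all

/-- Let `α` be an evaluation vector of distinct elements of `F_q` satisfying the
algebraic condition for `k = 2`, let `c_i = m₁ + m₂·α_i` with `m₂ ≠ 0`, let
`κ₁ < κ₂ < κ₃` and `β = (c_{κ₁} - c_{κ₂})/(c_{κ₂} - c_{κ₃})`. Then `(κ₁, κ₂, κ₃)` is the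
unique strictly increasing triple `J` with `(α_{J₁} - α_{J₂})/(α_{J₂} - α_{J₃}) = β`, and
the message `(m₁, m₂)` (hence the whole codeword) is uniquely determined by the received
triple `(c_{κ₁}, c_{κ₂}, c_{κ₃})`. -/
theorem rs2_unique_decoding {F : Type*} [Field F] [Fintype F] {n : ℕ}
    (α : Fin n → F) (hα : Function.Injective α)
    (hcond : ∀ I J : Fin 3 → Fin n, StrictMono I → StrictMono J →
      (Finset.univ.filter fun m => I m = J m).card ≤ 1 →
      Matrix.det !![1, α (I 0), α (J 0); 1, α (I 1), α (J 1); 1, α (I 2), α (J 2)] ≠ 0)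
    (m₁ m₂ : F) (hm₂ : m₂ ≠ 0) (κ : Fin 3 → Fin n) (hκ : StrictMono κ)
    (β : F)
    (hβ : β = ((m₁ + m₂ * α (κ 0)) - (m₁ + m₂ * α (κ 1))) /
      ((m₁ + m₂ * α (κ 1)) - (m₁ + m₂ * α (κ 2)))) :
    (∀ J : Fin 3 → Fin n, StrictMono J →
      (α (J 0) - α (J 1)) / (α (J 1) - α (J 2)) = β → J = κ) ∧
    (∀ m₁' m₂' : F, m₂' ≠ 0 → ∀ κ' : Fin 3 → Fin n, StrictMono κ' →
      (∀ j : Fin 3, m₁' + m₂' * α (κ' j) = m₁ + m₂ * α (κ j)) →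
      m₁' = m₁ ∧ m₂' = m₂ ∧ κ' = κ) := by
  have hd : ∀ (J : Fin 3 → Fin n), StrictMono J → ∀ i j : Fin 3, i < j → α (J i) - α (J j) ≠ 0 := by
    intro J hJ i j hij h
    exact (hJ hij).ne (hα (sub_eq_zero.mp h))
  have hκ01 := hd κ hκ 0 1 (by decide)
  have hκ12 := hd κ hκ 1 2 (by decide)
  have hden : (m₁ + m₂ * α (κ 1)) - (m₁ + m₂ * α (κ 2)) = m₂ * (α (κ 1) - α (κ 2)) := by ring
  have hden' : (m₁ + m₂ * α (κ 1)) - (m₁ + m₂ * α (κ 2)) ≠ 0 := by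
    rw [hden]; exact mul_ne_zero hm₂ hκ12
  have hβ' : β = (α (κ 0) - α (κ 1)) / (α (κ 1) - α (κ 2)) := by
    rw [hβ, div_eq_div_iff hden' hκ12]
    ring
  have key : ∀ J : Fin 3 → Fin n, StrictMono J →
      (α (J 0) - α (J 1)) / (α (J 1) - α (J 2)) = β → J = κ := by
    intro J hJ hr
    rw [hβ'] at hr
    have hJ12 := hd J hJ 1 2 (by decide)
    have cross : (α (J 0) - α (J 1)) * (α (κ 1) - α (κ 2))
        = (α (κ 0) - α (κ 1)) * (α (J 1) - α (J 2)) :=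
      (div_eq_div_iff hJ12 hκ12).mp hr
    by_cases h0 : κ 0 = J 0 <;> by_cases h1 : κ 1 = J 1 <;> by_cases h2 : κ 2 = J 2
    · funext i; fin_cases i <;> simp [h0.symm, h1.symm, h2.symm]
    · -- agree on 0,1, differ at 2
      exfalso; apply h2; apply hα
      rw [← h0, ← h1] at cross
      have h3 : (α (κ 0) - α (κ 1)) * (α (κ 2) - α (J 2)) = 0 := by linear_combination -cross
      rcases mul_eq_zero.mp h3 with h | h
      · exact absurd h hκ01
      · exact sub_eq_zero.mp h
    · exfalso; apply h1; apply hα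
      rw [← h0, ← h2] at cross
      have h3 : (α (κ 0) - α (κ 2)) * (α (κ 1) - α (J 1)) = 0 := by linear_combination cross
      rcases mul_eq_zero.mp h3 with h | h
      · exact absurd h (hd κ hκ 0 2 (by decide))
      · exact sub_eq_zero.mp h
    rotate_left 1
    · exfalso; apply h0; apply hα
      rw [← h1, ← h2] at cross
      have h3 : (α (κ 1) - α (κ 2)) * (α (κ 0) - α (J 0)) = 0 := by linear_combination -cross
      rcases mul_eq_zero.mp h3 with h | h
      · exact absurd h hκ12
      · exact sub_eq_zero.mp h
    all_goals {
      exfalso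
      refine hcond κ J hκ hJ ?_ ?_
      · exact rs2_aux_card κ J (by tauto) (by tauto) (by tauto)
      · rw [rs2_aux_det3]
        linear_combination -cross }
  refine ⟨key, ?_⟩
  intro m₁' m₂' hm₂' κ' hκ' heq
  have e01 : m₂' * (α (κ' 0) - α (κ' 1)) = m₂ * (α (κ 0) - α (κ 1)) := by
    linear_combination heq 0 - heq 1
  have e12 : m₂' * (α (κ' 1) - α (κ' 2)) = m₂ * (α (κ 1) - α (κ 2)) := by
    linear_combination heq 1 - heq 2
  have hκ'12 := hd κ' hκ' 1 2 (by decide)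
  have hratio : (α (κ' 0) - α (κ' 1)) / (α (κ' 1) - α (κ' 2)) = β := by
    rw [hβ', div_eq_div_iff hκ'12 hκ12]
    exact mul_left_cancel₀ hm₂' (by
      linear_combination (α (κ 1) - α (κ 2)) * e01 - (α (κ 0) - α (κ 1)) * e12)
  have hκ'κ : κ' = κ := key κ' hκ' hratio
  subst hκ'κ
  have hm : m₂' = m₂ := mul_right_cancel₀ hκ01 e01
  subst hm
  exact ⟨by linear_combination heq 0, rfl, rfl⟩
end

section
/- Let F_q be a finite field of odd characteristic, and let a, b, c, r, s, t, δ_1, δ_2, δ_3 ∈ F_q with r ≠ 0, δ_2 ≠ δ_3, and δ_1 ≠ δ_2. Set θ = a/r. Suppose δ_1 − δ_2 + c(δ_3 − δ_2) + t(δ_3² − δ_2²) = 0, δ_1² − δ_2² + b(δ_3 − δ_2) + s(δ_3² − δ_2²) = 0, and a(δ_3 − δ_2) + r(δ_3² − δ_2²) = 0. Then: (i) δ_3 = −δ_2 − θ; (ii) δ_1 = δ_2·(1 + 2c − 2tθ) + θ·(c − tθ); and (iii) 2·(c + c² − 2ctθ + tθ(tθ − 1))·δ_2 = b − θ·(c²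 + s − 2ctθ + t²θ²). -/
/-- General case of the coefficient system `p₀ = p₁ = p₂ = 0` arising in decoding the
2-dimensional Reed–Solomon code: over a finite field of odd characteristic, if `r ≠ 0`,
`δ₂ ≠ δ₃`, `δ₁ ≠ δ₂` and `θ = a/r`, then
(i) `δ₃ = -δ₂ - θ`,
(ii) `δ₁ = δ₂(1 + 2c - 2tθ) + θ(c - tθ)`, and
(iii) `2(c + c² - 2ctθ + tθ(tθ - 1))·δ₂ = b - θ(c² + s - 2ctθ + t²θ²)`. -/
theorem decoding_system_general_case {F : Type*} [Field F] [Fintype F]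
    (hchar : ringChar F ≠ 2)
    (a b c r s t δ₁ δ₂ δ₃ θ : F)
    (hr : r ≠ 0) (h23 : δ₂ ≠ δ₃) (h12 : δ₁ ≠ δ₂) (hθ : θ = a / r)
    (hp0 : δ₁ - δ₂ + c * (δ₃ - δ₂) + t * (δ₃ ^ 2 - δ₂ ^ 2) = 0)
    (hp1 : δ₁ ^ 2 - δ₂ ^ 2 + b * (δ₃ - δ₂) + s * (δ₃ ^ 2 - δ₂ ^ 2) = 0)
    (hp2 : a * (δ₃ - δ₂) + r * (δ₃ ^ 2 - δ₂ ^ 2) = 0) :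
    δ₃ = -δ₂ - θ ∧
    δ₁ = δ₂ * (1 + 2 * c - 2 * t * θ) + θ * (c - t * θ) ∧
    2 * (c + c ^ 2 - 2 * c * t * θ + t * θ * (t * θ - 1)) * δ₂ =
      b - θ * (c ^ 2 + s - 2 * c * t * θ + t ^ 2 * θ ^ 2) := by
  have ha : a = θ * r := by rw [hθ]; field_simp
  subst ha
  have hne : δ₃ - δ₂ ≠ 0 := sub_ne_zero.mpr (Ne.symm h23)
  have key : r * ((δ₃ - δ₂) * (θ + δ₃ + δ₂)) = 0 := by linear_combination hp2
  have hsum : θ + δ₃ + δ₂ = 0 := by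
    rcases mul_eq_zero.mp key with h | h
    · exact absurd h hr
    · rcases mul_eq_zero.mp h with h | h
      · exact absurd h hne
      · exact h
  have hi : δ₃ = -δ₂ - θ := by linear_combination hsum
  subst hi
  have hii : δ₁ = δ₂ * (1 + 2 * c - 2 * t * θ) + θ * (c - t * θ) := by
    linear_combination hp0
  refine ⟨rfl, hii, ?_⟩
  have hne2 : 2 * δ₂ + θ ≠ 0 := by
    intro h
    apply h12
    linear_combination hii + (c - t * θ) * h
  have hfac : (2 * δ₂ + θ) * ((c - t * θ) * (δ₁ + δ₂) - (b - s * θ)) = 0 := by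
    linear_combination hp1 - (δ₁ + δ₂) * hii
  have hq : (c - t * θ) * (δ₁ + δ₂) - (b - s * θ) = 0 :=
    (mul_eq_zero.mp hfac).resolve_left hne2
  linear_combination hq - (c - t * θ) * hii
end

section
/- Let F_q be a finite field of odd characteristic, let γ ∈ F_{q^3} be a root of a degree-3 irreducible polynomial over F_q, let δ_1, …, δ_n be distinct nonzero elements of F_q, and set α_i = δ_i + δ_i²γ. Let m_1, m_2 ∈ F_{q^3} with m_2 ≠ 0, let c_i = m_1 + m_2·α_i, let 1 ≤ κ_1 < κ_2 < κ_3 ≤ n, and set β = (c_{κ_1} − c_{κ_2})/(c_{κ_2} − c_{κ_3}) ∈ F_{q^3}. Write β = aγ² + bγ + c and βγ = rγ² + sγ + t with a, b, c, r, s, t ∈ F_q. Then r ≠ 0, and with θ = a/r the following hold: δ_{κ_3} = −δ_{κ_2} − θ, δ_{κ_1} = δ_{κ_2}·(1 + 2c − 2tθ) + θ·(c − tθ), and 2·(c + c² − 2ctθ + tθ(tθ − 1))·δ_{κ_2} = b − θ·(c² + s − 2ctθ + t²θ²). In particular, the triple (δ_{κ_1}, δ_{κ_2}, δ_{κ_3}),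 and hence the indices (κ_1, κ_2, κ_3) and the full codeword, are determined from the received triple (c_{κ_1}, c_{κ_2}, c_{κ_3}) by closed-form field operations. -/
/-- **Linear-time decoder correctness.** Let `F = F_q` have odd characteristic, let `γ`
generate the cubic extension `E = F_{q^3}` (a root of a degree-3 irreducible polynomial
over `F`), let `δ_1, …, δ_n` be distinct nonzero elements of `F` and `α_i = δ_i + δ_i²γ`.
For a codeword `c_i = m₁ + m₂·α_i` (`m₂ ≠ 0`), indices `κ₁ < κ₂ < κ₃`, and
`β = (c_{κ₁} - c_{κ₂})/(c_{κ₂} - c_{κ₃})`, write `β = aγ² + bγ + c` and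
`βγ = rγ² + sγ + t` with `a, …, t ∈ F`. Then `r ≠ 0` and, with `θ = a/r`:
`δ_{κ₃} = -δ_{κ₂} - θ`, `δ_{κ₁} = δ_{κ₂}(1 + 2c - 2tθ) + θ(c - tθ)`, and
`2(c + c² - 2ctθ + tθ(tθ - 1))·δ_{κ₂} = b - θ(c² + s - 2ctθ + t²θ²)`. -/
theorem rs2_linear_decoder_formulas
    {F E : Type*} [Field F] [Fintype F] [Field E] [Algebra F E]
    (hchar : ringChar F ≠ 2) (hrank : Module.finrank F E = 3)
    (γ : E) (φ : Polynomial F) (hφ : Irreducible φ) (hdeg : φ.degree = 3)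
    (hroot : Polynomial.aeval γ φ = 0)
    {n : ℕ} (δ : Fin n → F) (hδinj : Function.Injective δ) (hδ0 : ∀ i, δ i ≠ 0)
    (α : Fin n → E)
    (hα : ∀ i, α i = algebraMap F E (δ i) + algebraMap F E (δ i) ^ 2 * γ)
    (m₁ m₂ : E) (hm₂ : m₂ ≠ 0)
    (κ : Fin 3 → Fin n) (hκ : StrictMono κ)
    (β : E)
    (hβdef : β = ((m₁ + m₂ * α (κ 0)) - (m₁ + m₂ * α (κ 1))) /
      ((m₁ + m₂ * α (κ 1)) - (m₁ + m₂ * α (κ 2))))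
    (a b c r s t θ : F)
    (hβ : β = algebraMap F E a * γ ^ 2 + algebraMap F E b * γ + algebraMap F E c)
    (hβγ : β * γ = algebraMap F E r * γ ^ 2 + algebraMap F E s * γ + algebraMap F E t)
    (hθ : θ = a / r) :
    r ≠ 0 ∧
    δ (κ 2) = -δ (κ 1) - θ ∧
    δ (κ 0) = δ (κ 1) * (1 + 2 * c - 2 * t * θ) + θ * (c - t * θ) ∧
    2 * (c + c ^ 2 - 2 * c * t * θ + t * θ * (t * θ - 1)) * δ (κ 1) =
      b - θ * (c ^ 2 + s - 2 * c * t * θ + t ^ 2 * θ ^ 2) := by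
  have hmpdeg : (minpoly F γ).degree = 3 := by
    rw [← minpoly.eq_of_irreducible hφ hroot, Polynomial.degree_mul,
      Polynomial.degree_C (by
        simp [Polynomial.leadingCoeff_ne_zero.mpr hφ.ne_zero]), hdeg, add_zero]
  have key : ∀ x y z : F, algebraMap F E x + algebraMap F E y * γ +
      algebraMap F E z * γ ^ 2 = 0 → x = 0 ∧ y = 0 ∧ z = 0 := by
    intro x y z h
    set P : Polynomial F := Polynomial.C z * Polynomial.X ^ 2 +
      Polynomial.C y * Polynomial.X + Polynomial.C x with hP
    have hPa : Polynomial.aeval γ P = 0 := by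
      simp only [hP, map_add, map_mul, map_pow, Polynomial.aeval_C, Polynomial.aeval_X]
      linear_combination h
    have hP0 : P = 0 := by
      by_contra hne
      have h1 := minpoly.degree_le_of_ne_zero F γ hne hPa
      have h2 : P.degree ≤ 2 := Polynomial.degree_quadratic_le
      rw [hmpdeg] at h1
      exact absurd (h1.trans h2) (by norm_num)
    refine ⟨?_, ?_, ?_⟩
    · have := congrArg (fun q => Polynomial.coeff q 0) hP0
      simpa [hP] using this
    · have := congrArg (fun q => Polynomial.coeff q 1) hP0
      simpa [hP] using this
    · have := congrArg (fun q => Polynomial.coeff q 2) hP0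
      simpa [hP] using this
  set d1 := δ (κ 0) with hd1def
  set d2 := δ (κ 1) with hd2def
  set d3 := δ (κ 2) with hd3def
  have hne12 : d1 ≠ d2 := fun h =>
    (hκ (show (0 : Fin 3) < 1 by decide)).ne (hδinj h)
  have hne23 : d2 ≠ d3 := fun h =>
    (hκ (show (1 : Fin 3) < 2 by decide)).ne (hδinj h)
  have hne13 : d1 ≠ d3 := fun h =>
    (hκ (show (0 : Fin 3) < 2 by decide)).ne (hδinj h)
  have hu : d2 - d3 ≠ 0 := sub_ne_zero.mpr hne23
  have hp : d1 - d2 ≠ 0 := sub_ne_zero.mpr hne12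
  have hD : (m₁ + m₂ * α (κ 1)) - (m₁ + m₂ * α (κ 2)) ≠ 0 := by
    intro h
    have hα0 : α (κ 1) - α (κ 2) = 0 := by
      rcases mul_eq_zero.mp (show m₂ * (α (κ 1) - α (κ 2)) = 0 by
        linear_combination h) with h' | h'
      · exact absurd h' hm₂
      · exact h'
    rw [hα, hα] at hα0
    refine hu (key (d2 - d3) (d2 ^ 2 - d3 ^ 2) 0 ?_).1
    simp only [map_sub, map_pow, map_zero]
    linear_combination hα0
  have hmaster : β * ((algebraMap F E d2 - algebraMap F E d3) +
        ((algebraMap F E d2) ^ 2 - (algebraMap F E d3) ^ 2) * γ) =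
      (algebraMap F E d1 - algebraMap F E d2) +
        ((algebraMap F E d1) ^ 2 - (algebraMap F E d2) ^ 2) * γ := by
    have h1 : β * ((m₁ + m₂ * α (κ 1)) - (m₁ + m₂ * α (κ 2))) =
        (m₁ + m₂ * α (κ 0)) - (m₁ + m₂ * α (κ 1)) := by
      rw [hβdef]; exact div_mul_cancel₀ _ hD
    rw [hα, hα, hα] at h1
    apply mul_left_cancel₀ hm₂
    linear_combination h1
  obtain ⟨E3, E2, E1⟩ := key ((d2 - d3) * c + (d2 ^ 2 - d3 ^ 2) * t - (d1 - d2))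
    ((d2 - d3) * b + (d2 ^ 2 - d3 ^ 2) * s - (d1 ^ 2 - d2 ^ 2))
    ((d2 - d3) * a + (d2 ^ 2 - d3 ^ 2) * r) (by
      simp only [map_sub, map_add, map_mul, map_pow]
      linear_combination hmaster - (algebraMap F E d2 - algebraMap F E d3) * hβ -
        ((algebraMap F E d2) ^ 2 - (algebraMap F E d3) ^ 2) * hβγ)
  have hr : r ≠ 0 := by
    intro hr0
    have ha0 : a = 0 := by
      have h0 : (d2 - d3) * (a + (d2 + d3) * r) = 0 := by linear_combination E1
      have h' := (mul_eq_zero.mp h0).resolve_left hu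
      rw [hr0] at h'
      linear_combination h'
    rw [ha0, map_zero] at hβ
    obtain ⟨ht0, hsc, hrb⟩ := key t (s - c) (r - b) (by
      simp only [map_sub]
      linear_combination γ * hβ - hβγ)
    have hb0 : b = 0 := by linear_combination hr0 - hrb
    have hc0 : c ≠ 0 := by
      intro hc0
      apply hp
      rw [hc0] at E3
      linear_combination (d2 ^ 2 - d3 ^ 2) * ht0 - E3
    have hq : (d1 - d2) * (d1 + d2) = (d1 - d2) * (d2 + d3) := by
      have e3 : (d2 - d3) * c = d1 - d2 := by
        linear_combination E3 - (d2 ^ 2 - d3 ^ 2) * ht0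
      have e2 : (d2 ^ 2 - d3 ^ 2) * c = d1 ^ 2 - d2 ^ 2 := by
        linear_combination E2 - (d2 - d3) * hb0 - (d2 ^ 2 - d3 ^ 2) * hsc
      linear_combination (d2 + d3) * e3 - e2
    exact hne13 (by linear_combination mul_left_cancel₀ hp hq)
  have hθw : θ = -(d2 + d3) := by
    have ha : a = -(d2 + d3) * r := by
      have h0 : (d2 - d3) * (a + (d2 + d3) * r) = 0 := by linear_combination E1
      have h' := (mul_eq_zero.mp h0).resolve_left hu
      linear_combination h'
    have h1 : θ * r = -(d2 + d3) * r := by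
      rw [hθ, div_mul_cancel₀ a hr, ha]
    exact mul_right_cancel₀ hr h1
  have hd3 : d3 = -d2 - θ := by linear_combination hθw
  rw [hd3] at E3 E2
  have hkd1 : d1 = d2 * (1 + 2 * c - 2 * t * θ) + θ * (c - t * θ) := by
    linear_combination -E3
  have hu' : 2 * d2 + θ ≠ 0 := by
    intro h
    apply hu
    rw [hd3]
    linear_combination h
  have hb : (2 * d2 + θ) * (b - θ * s) = (2 * d2 + θ) * ((c - t * θ) * (d1 + d2)) := by
    linear_combination E2 - (d1 + d2) * E3
  have hbb : b - θ * s = (c - t * θ) * (d1 + d2) := mul_left_cancel₀ hu' hb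
  exact ⟨hr, hd3, hkd1, by linear_combination -hbb - (c - t * θ) * hkd1⟩
end
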